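/- There is an absolute constant C such that for all q ≥ 2, ∑_{n ≤ q, gcd(n,q)=1} 2^{ω(n)}/n ≤ C·(φ(q)/q)^2·(log q)^2. -/

import Mathlib

/-!
Since `2 ^ ω(n) ≤ d(n)` and `d(n) / n = ∑_{ab = n} 1 / (ab)`, the sum is at most `T²`, where
`T = ∑_{n ≤ q, (n, q) = 1} 1 / n`. Multiplying `T` by `B = ∑_{d ∣ q} 1 / d` gives a sum of `1 / m`
over distinct `m = d n ≤ q²` (`d` is recovered as `gcd(m, q)`), so `B T ≤ 1 + 2 log q`. Finally
`(φ(q) / q) B ≥ ∏_{p ∣ q} (1 - 1/p)(1 + 1/p) = ∏_{p ∣ q} (1 - 1/p²) ≥ ∏_{k=2}^{q} (1 - 1/k²) ≥ 1/2`,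
hence `T ≤ 8 (φ(q) / q) log q`.
-/

open Finset

theorem Nat.two_pow_card_primeFactors_le_card_divisors {n : ℕ} (hn : n ≠ 0) :
    2 ^ #n.primeFactors ≤ #n.divisors := by
  rw [Nat.card_divisors hn, ← prod_const]
  refine prod_le_prod' fun p hp => ?_
  have := (Nat.prime_of_mem_primeFactors hp).factorization_pos_of_dvd hn
    (Nat.dvd_of_mem_primeFactors hp)
  omega

theorem sum_inv_mul_sum_inv (s t : Finset ℕ) :
    (∑ a ∈ s, (a : ℝ)⁻¹) * ∑ b ∈ t, (b : ℝ)⁻¹ = ∑ x ∈ s ×ˢ t, ((x.1 * x.2 : ℕ) : ℝ)⁻¹ := by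
  rw [sum_mul_sum, sum_product]
  simp only [Nat.cast_mul, mul_inv]

theorem sum_card_divisors_div_le_sq_sum_inv {A : Finset ℕ}
    (hA : ∀ n ∈ A, ∀ d ∈ n.divisors, d ∈ A) :
    ∑ n ∈ A, (#n.divisors : ℝ) / n ≤ (∑ n ∈ A, (n : ℝ)⁻¹) ^ 2 := by
  have fiber (n : ℕ) (hn : n ∈ A) :
      (#n.divisors : ℝ) / n ≤ ∑ x ∈ A ×ˢ A with x.1 * x.2 = n, ((x.1 * x.2 : ℕ) : ℝ)⁻¹ := by
    have hsub : n.divisorsAntidiagonal ⊆ {x ∈ A ×ˢ A | x.1 * x.2 = n} := fun x hx =>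
      mem_filter.2 ⟨mem_product.2 ⟨hA n hn _ (Nat.fst_mem_divisors_of_mem_antidiagonal hx),
        hA n hn _ (Nat.snd_mem_divisors_of_mem_antidiagonal hx)⟩,
        (Nat.mem_divisorsAntidiagonal.1 hx).1⟩
    have hcard : #n.divisors ≤ #{x ∈ A ×ˢ A | x.1 * x.2 = n} := by
      rw [← Nat.image_fst_divisorsAntidiagonal]
      exact card_image_le.trans (card_le_card hsub)
    rw [sum_congr rfl fun x hx => by rw [(mem_filter.1 hx).2], sum_const, nsmul_eq_mul,
      div_eq_mul_inv]
    gcongr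
  calc ∑ n ∈ A, (#n.divisors : ℝ) / n
      ≤ ∑ n ∈ A, ∑ x ∈ A ×ˢ A with x.1 * x.2 = n, ((x.1 * x.2 : ℕ) : ℝ)⁻¹ := sum_le_sum fiber
    _ ≤ ∑ x ∈ A ×ˢ A, ((x.1 * x.2 : ℕ) : ℝ)⁻¹ :=
      sum_fiberwise_le_sum_of_sum_fiber_nonneg fun _ _ => sum_nonneg fun _ _ => by positivity
    _ = _ := by rw [sq, sum_inv_mul_sum_inv]

theorem Nat.injOn_mul_divisors_prod_coprime (q : ℕ) :
    Set.InjOn (fun x : ℕ × ℕ => x.1 * x.2) {x | x.1 ∈ q.divisors ∧ x.2.Coprime q} := by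
  rintro ⟨d, n⟩ ⟨hd : d ∈ q.divisors, hn : n.Coprime q⟩ ⟨d', n'⟩
    ⟨hd' : d' ∈ q.divisors, hn' : n'.Coprime q⟩ (h : d * n = d' * n')
  have hdd' : d = d' :=
    calc d = Nat.gcd (d * n) q := by
          rw [hn.gcd_mul_right_cancel, Nat.gcd_eq_left (Nat.dvd_of_mem_divisors hd)]
      _ = Nat.gcd (d' * n') q := by rw [h]
      _ = d' := by rw [hn'.gcd_mul_right_cancel, Nat.gcd_eq_left (Nat.dvd_of_mem_divisors hd')]
  subst hdd'
  simp [Nat.eq_of_mul_eq_mul_left (Nat.pos_of_mem_divisors hd) h]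

theorem sum_Icc_inv_le_one_add_log (N : ℕ) : ∑ m ∈ Icc 1 N, (m : ℝ)⁻¹ ≤ 1 + Real.log N := by
  simpa [harmonic_eq_sum_Icc] using harmonic_le_one_add_log N

theorem sum_divisors_inv_mul_sum_inv_le {q N : ℕ} {S : Finset ℕ} (hS : S ⊆ Icc 1 N)
    (hcop : ∀ n ∈ S, n.Coprime q) :
    (∑ d ∈ q.divisors, (d : ℝ)⁻¹) * ∑ n ∈ S, (n : ℝ)⁻¹ ≤ 1 + Real.log (q * N : ℕ) := by
  have hinj : Set.InjOn (fun x : ℕ × ℕ => x.1 * x.2) ↑(q.divisors ×ˢ S) :=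
    (Nat.injOn_mul_divisors_prod_coprime q).mono fun x hx => by
      obtain ⟨hd, hn⟩ := mem_product.1 hx
      exact ⟨hd, hcop _ hn⟩
  have hsub : (q.divisors ×ˢ S).image (fun x : ℕ × ℕ => x.1 * x.2) ⊆ Icc 1 (q * N) := by
    intro m hm
    obtain ⟨⟨d, n⟩, hx, rfl⟩ := mem_image.1 hm
    obtain ⟨hd, hn⟩ := mem_product.1 hx
    obtain ⟨hn1, hnN⟩ := mem_Icc.1 (hS hn)
    exact mem_Icc.2 ⟨Nat.mul_pos (Nat.pos_of_mem_divisors hd) hn1,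
      Nat.mul_le_mul (Nat.divisor_le hd) hnN⟩
  calc (∑ d ∈ q.divisors, (d : ℝ)⁻¹) * ∑ n ∈ S, (n : ℝ)⁻¹
      = ∑ m ∈ (q.divisors ×ˢ S).image (fun x : ℕ × ℕ => x.1 * x.2), (m : ℝ)⁻¹ := by
        rw [sum_inv_mul_sum_inv, sum_image hinj]
    _ ≤ ∑ m ∈ Icc 1 (q * N), (m : ℝ)⁻¹ :=
      sum_le_sum_of_subset_of_nonneg hsub fun _ _ _ => by positivity
    _ ≤ 1 + Real.log (q * N : ℕ) := by exact_mod_cast sum_Icc_inv_le_one_add_log (q * N)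

theorem prod_Icc_one_sub_inv_sq {N : ℕ} (hN : 1 ≤ N) :
    ∏ k ∈ Icc 2 N, (1 - ((k : ℝ) ^ 2)⁻¹) = (N + 1) / (2 * N) := by
  induction N, hN using Nat.le_induction with
  | base => norm_num
  | succ N hN ih =>
    rw [prod_Icc_succ_top (by omega), ih]
    have : (N : ℝ) ≠ 0 := by positivity
    push_cast
    field_simp
    ring

theorem Nat.one_half_le_prod_primeFactors_one_sub_inv_sq (q : ℕ) :
    1 / 2 ≤ ∏ p ∈ q.primeFactors, (1 - ((p : ℝ) ^ 2)⁻¹) := by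
  rcases Nat.eq_zero_or_pos q with rfl | hq
  · norm_num
  have hfac (k : ℕ) (hk : k ∈ Icc 2 q) : 0 ≤ 1 - ((k : ℝ) ^ 2)⁻¹ ∧ 1 - ((k : ℝ) ^ 2)⁻¹ ≤ 1 := by
    have : (1 : ℝ) ≤ (k : ℝ) ^ 2 :=
      one_le_pow₀ (by exact_mod_cast (mem_Icc.1 hk).1.trans' one_le_two)
    exact ⟨sub_nonneg.2 (inv_le_one_of_one_le₀ this), sub_le_self _ (by positivity)⟩
  have hsub : q.primeFactors ⊆ Icc 2 q := fun p hp =>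
    mem_Icc.2 ⟨(Nat.prime_of_mem_primeFactors hp).two_le, Nat.le_of_mem_primeFactors hp⟩
  calc (1 : ℝ) / 2 ≤ (q + 1) / (2 * q) := by
        rw [div_le_div_iff₀ two_pos (by positivity)]; linarith
    _ = ∏ k ∈ Icc 2 q, (1 - ((k : ℝ) ^ 2)⁻¹) := (prod_Icc_one_sub_inv_sq hq).symm
    _ ≤ _ := prod_le_prod_of_subset_of_le_one hsub (fun k hk => (hfac k hk).1)
        fun k hk _ => (hfac k hk).2

theorem Nat.prod_primeFactors_one_add_inv_le_sum_divisors_inv {q : ℕ} (hq : q ≠ 0) :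
    ∏ p ∈ q.primeFactors, (1 + (p : ℝ)⁻¹) ≤ ∑ d ∈ q.divisors, (d : ℝ)⁻¹ := by
  have hinj : Set.InjOn (fun t : Finset ℕ => ∏ p ∈ t, p) ↑q.primeFactors.powerset :=
    fun t ht u hu h => by
      have prime_of_mem {t : Finset ℕ} (ht : t ∈ q.primeFactors.powerset) (p) (hp : p ∈ t) :
          p.Prime := Nat.prime_of_mem_primeFactors (mem_powerset.1 ht hp)
      rw [← Nat.primeFactors_prod (prime_of_mem ht), ← Nat.primeFactors_prod (prime_of_mem hu)]
      exact congrArg Nat.primeFactors h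
  have hsub : q.primeFactors.powerset.image (fun t => ∏ p ∈ t, p) ⊆ q.divisors := by
    intro m hm
    obtain ⟨t, ht, rfl⟩ := mem_image.1 hm
    exact Nat.mem_divisors.2 ⟨(prod_dvd_prod_of_subset _ _ _ (mem_powerset.1 ht)).trans
      (Nat.prod_primeFactors_dvd q), hq⟩
  calc ∏ p ∈ q.primeFactors, (1 + (p : ℝ)⁻¹)
      = ∑ m ∈ q.primeFactors.powerset.image (fun t => ∏ p ∈ t, p), (m : ℝ)⁻¹ := by
        rw [prod_one_add, sum_image hinj]
        simp only [Nat.cast_prod, prod_inv_distrib]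
    _ ≤ ∑ d ∈ q.divisors, (d : ℝ)⁻¹ :=
      sum_le_sum_of_subset_of_nonneg hsub fun _ _ _ => by positivity

theorem Nat.totient_div_eq_prod_primeFactors {q : ℕ} (hq : q ≠ 0) :
    (q.totient : ℝ) / q = ∏ p ∈ q.primeFactors, (1 - (p : ℝ)⁻¹) := by
  have := congrArg (fun x : ℚ => (x : ℝ)) (Nat.totient_eq_mul_prod_factors q)
  push_cast at this
  rw [this, mul_div_cancel_left₀ _ (by exact_mod_cast hq)]

theorem Nat.one_half_le_totient_div_mul_sum_divisors_inv {q : ℕ} (hq : q ≠ 0) :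
    1 / 2 ≤ (q.totient : ℝ) / q * ∑ d ∈ q.divisors, (d : ℝ)⁻¹ := by
  have hnonneg : ∀ p ∈ q.primeFactors, 0 ≤ 1 - (p : ℝ)⁻¹ := fun p hp =>
    sub_nonneg.2 <| inv_le_one_of_one_le₀ <| by
      exact_mod_cast (Nat.prime_of_mem_primeFactors hp).one_le
  calc (1 : ℝ) / 2 ≤ ∏ p ∈ q.primeFactors, (1 - ((p : ℝ) ^ 2)⁻¹) :=
        Nat.one_half_le_prod_primeFactors_one_sub_inv_sq q
    _ = (∏ p ∈ q.primeFactors, (1 - (p : ℝ)⁻¹)) * ∏ p ∈ q.primeFactors, (1 + (p : ℝ)⁻¹) := by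
        rw [← prod_mul_distrib]
        exact prod_congr rfl fun p _ => by ring
    _ ≤ (q.totient : ℝ) / q * ∑ d ∈ q.divisors, (d : ℝ)⁻¹ := by
        rw [Nat.totient_div_eq_prod_primeFactors hq]
        exact mul_le_mul_of_nonneg_left
          (Nat.prod_primeFactors_one_add_inv_le_sum_divisors_inv hq) (prod_nonneg hnonneg)

theorem filter_coprime_Icc_of_mem_divisors {q N n d : ℕ}
    (hn : n ∈ (Icc 1 N).filter (fun n => Nat.gcd n q = 1)) (hd : d ∈ n.divisors) :
    d ∈ (Icc 1 N).filter (fun n => Nat.gcd n q = 1) := by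
  obtain ⟨hn, hcop⟩ := mem_filter.1 hn
  obtain ⟨hdn, hn0⟩ := Nat.mem_divisors.1 hd
  exact mem_filter.2 ⟨mem_Icc.2 ⟨Nat.pos_of_mem_divisors hd,
    (Nat.le_of_dvd (Nat.pos_of_ne_zero hn0) hdn).trans (mem_Icc.1 hn).2⟩,
    Nat.Coprime.coprime_dvd_left hdn hcop⟩

theorem sum_inv_filter_coprime_le {q : ℕ} (hq : 2 ≤ q) :
    ∑ n ∈ (Icc 1 q).filter (fun n => Nat.gcd n q = 1), (n : ℝ)⁻¹ ≤
      8 * ((q.totient : ℝ) / q) * Real.log q := by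
  set T := ∑ n ∈ (Icc 1 q).filter (fun n => Nat.gcd n q = 1), (n : ℝ)⁻¹
  set B := ∑ d ∈ q.divisors, (d : ℝ)⁻¹
  set r := (q.totient : ℝ) / q
  have hBT : B * T ≤ 1 + 2 * Real.log q := by
    have hq0 : (q : ℝ) ≠ 0 := by positivity
    have := sum_divisors_inv_mul_sum_inv_le (q := q) (filter_subset _ (Icc 1 q))
      fun n hn => (mem_filter.1 hn).2
    rwa [Nat.cast_mul, Real.log_mul hq0 hq0, ← two_mul] at this
  have hrB : 1 / 2 ≤ r * B := Nat.one_half_le_totient_div_mul_sum_divisors_inv (by omega)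
  have hlog : 1 / 2 ≤ Real.log q := by
    have : Real.log 2 ≤ Real.log q := Real.log_le_log two_pos (by exact_mod_cast hq)
    linarith [Real.log_two_gt_d9]
  have hT0 : 0 ≤ T := sum_nonneg fun _ _ => by positivity
  calc T ≤ 2 * (r * B) * T := by nlinarith
    _ = 2 * r * (B * T) := by ring
    _ ≤ 2 * r * (1 + 2 * Real.log q) := by gcongr
    _ ≤ 8 * r * Real.log q := by nlinarith [show 0 ≤ r by positivity]

open Finset in
/-- Lemma 5 (first part): `∑_{n ≤ q, (n,q)=1} 2^{ω(n)}/n ≪ (φ(q)/q)^2 (log q)^2`. -/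
theorem sum_two_pow_omega_div_le :
    ∃ C : ℝ, ∀ q : ℕ, 2 ≤ q →
      (∑ n ∈ (Finset.Icc 1 q).filter (fun n => Nat.gcd n q = 1),
          (2 : ℝ) ^ n.primeFactors.card / n) ≤
        C * ((Nat.totient q : ℝ) / q) ^ 2 * (Real.log q) ^ 2 := by
  refine ⟨64, fun q hq => ?_⟩
  set A := (Icc 1 q).filter (fun n => Nat.gcd n q = 1)
  have hω : ∑ n ∈ A, (2 : ℝ) ^ #n.primeFactors / n ≤ ∑ n ∈ A, (#n.divisors : ℝ) / n := by
    refine sum_le_sum fun n hn => ?_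
    gcongr
    exact_mod_cast Nat.two_pow_card_primeFactors_le_card_divisors
      (Nat.one_le_iff_ne_zero.1 (mem_Icc.1 (mem_filter.1 hn).1).1)
  calc ∑ n ∈ A, (2 : ℝ) ^ #n.primeFactors / n
      ≤ (∑ n ∈ A, (n : ℝ)⁻¹) ^ 2 :=
        hω.trans (sum_card_divisors_div_le_sq_sum_inv fun _ hn _ hd =>
          filter_coprime_Icc_of_mem_divisors hn hd)
    _ ≤ (8 * ((q.totient : ℝ) / q) * Real.log q) ^ 2 :=
        pow_le_pow_left₀ (sum_nonneg fun _ _ => by positivity) (sum_inv_filter_coprime_le hq) 2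
    _ = 64 * ((q.totient : ℝ) / q) ^ 2 * Real.log q ^ 2 := by ring
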